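/- arXiv:2007.08399 — 2 statements merged into one kernel-verified Lean document; each statement's English description precedes it below -/
import Mathlib

section
/- Let u be subharmonic on Ω ⊂ ℝⁿ and continuous, x₀ ∈ Ω_{(2A+1)δ} for A > 2, and suppose y₀, ξ₀ ∈ B̄(x₀,δ) realize the oscillation O_δu(x₀) = u(y₀) - u(ξ₀); set a = A-2, r = Aδ. Then the volume mean satisfies Λ_ru(ξ₀) - u(ξ₀) ≥ O_δu(x₀) - (1 - aⁿ/(a+2)ⁿ)·O_{r+δ}u(x₀). -/
open MeasureTheory Metric Set Filter

noncomputable section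

/-- Subharmonicity via the sub-mean value property over closed balls. -/
def SubharmonicOn {n : ℕ} (u : EuclideanSpace ℝ (Fin n) → ℝ)
    (Ω : Set (EuclideanSpace ℝ (Fin n))) : Prop :=
  UpperSemicontinuousOn u Ω ∧ LocallyIntegrableOn u Ω ∧
    ∀ x r, 0 < r → closedBall x r ⊆ Ω → u x ≤ ⨍ y in closedBall x r, u y

/-- The surface measure on the unit sphere of `ℝⁿ`. -/
def sphereMeasure (n : ℕ) : Measure (sphere (0 : EuclideanSpace ℝ (Fin n)) 1) :=
  (volume : Measure (EuclideanSpace ℝ (Fin n))).toSphere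

/-- Total area `σ_{n-1}` of the unit sphere of `ℝⁿ`. -/
def sphereArea (n : ℕ) : ℝ := ((sphereMeasure n) univ).toReal

/-- Spherical mean `A_s u (x)` of `u` over the sphere of radius `s` centered at `x`. -/
def sphericalMean {n : ℕ} (u : EuclideanSpace ℝ (Fin n) → ℝ)
    (x : EuclideanSpace ℝ (Fin n)) (s : ℝ) : ℝ :=
  (sphereArea n)⁻¹ * ∫ ξ, u (x + s • (ξ : EuclideanSpace ℝ (Fin n))) ∂(sphereMeasure n)

/-- Volume mean `Λ_δ u (x)` of `u` over the ball of radius `δ` centered at `x`. -/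
def volumeMean {n : ℕ} (u : EuclideanSpace ℝ (Fin n) → ℝ)
    (x : EuclideanSpace ℝ (Fin n)) (δ : ℝ) : ℝ :=
  ⨍ y in ball x δ, u y

/-- Max characteristic `M_δ u (x) = max_{|y-x| ≤ δ} u (y)`. -/
def maxBall {n : ℕ} (u : EuclideanSpace ℝ (Fin n) → ℝ)
    (x : EuclideanSpace ℝ (Fin n)) (δ : ℝ) : ℝ :=
  sSup (u '' closedBall x δ)

/-- Oscillation of `u` on a set. -/
def oscOn {n : ℕ} (u : EuclideanSpace ℝ (Fin n) → ℝ)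
    (s : Set (EuclideanSpace ℝ (Fin n))) : ℝ :=
  sSup (u '' s) - sInf (u '' s)

/-- `Ω_δ = {x ∈ Ω : dist(x, ∂Ω) > δ}`. -/
def shrink {n : ℕ} (Ω : Set (EuclideanSpace ℝ (Fin n))) (δ : ℝ) :
    Set (EuclideanSpace ℝ (Fin n)) :=
  {x ∈ Ω | δ < Metric.infDist x Ωᶜ}

/-- Regularization `R_δ u (x)` by a radial kernel `ρ` (given as a function of the radius). -/
def radialReg {n : ℕ} (ρ : ℝ → ℝ) (u : EuclideanSpace ℝ (Fin n) → ℝ)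
    (x : EuclideanSpace ℝ (Fin n)) (δ : ℝ) : ℝ :=
  ∫ ξ in ball (0 : EuclideanSpace ℝ (Fin n)) 1, u (x + δ • ξ) * ρ ‖ξ‖

/-- A modulus of continuity: continuous, increasing, subadditive, vanishing at `0`. -/
structure ModulusOfContinuity (κ : ℝ → ℝ) : Prop where
  continuous : ContinuousOn κ (Ici 0)
  mono : ∀ s t, 0 ≤ s → s ≤ t → κ s ≤ κ t
  subadd : ∀ s t, 0 ≤ s → 0 ≤ t → κ (s + t) ≤ κ s + κ t
  zero : κ 0 = 0
  nonneg : ∀ t, 0 ≤ t → 0 ≤ κ t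

end

/-!
Split `B(ξ₀, Aδ)` into `B(y₀, (A - 2)δ)`, which it contains because `|y₀ - ξ₀| ≤ 2δ`, and the
rest. On the small ball the sub-mean value property bounds the mean of `u` below by `u(y₀)`; on the
rest `u` is at least its infimum over `B(x₀, Aδ + δ)`. The two pieces are weighted by the volume
ratio `((A - 2) / A)ⁿ`, and `u(y₀) ≤ sup_{B(x₀, Aδ + δ)} u` turns the resulting convex combination
into the oscillation bound.
-/

open scoped ENNReal

section Average

variable {α : Type*} [MeasurableSpace α] {μ : Measure α} {s t : Set α} {f : α → ℝ} {c m : ℝ}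

theorem le_setAverage_of_subset (hts : t ⊆ s) (hsm : MeasurableSet s) (ht : MeasurableSet t)
    (hs : μ s ≠ ∞) (hs₀ : μ s ≠ 0) (hf : IntegrableOn f s μ) (hc : c ≤ ⨍ x in t, f x ∂μ)
    (hm : ∀ x ∈ s \ t, m ≤ f x) :
    μ.real t / μ.real s * c + (1 - μ.real t / μ.real s) * m ≤ ⨍ x in s, f x ∂μ := by
  have hpos : 0 < μ.real s := ENNReal.toReal_pos hs₀ hs
  have hin : μ.real t * c ≤ ∫ x in t, f x ∂μ := by
    rw [← measure_smul_setAverage f (measure_ne_top_of_subset hts hs), smul_eq_mul]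
    exact mul_le_mul_of_nonneg_left hc measureReal_nonneg
  have hout : m * (μ.real s - μ.real t) ≤ ∫ x in s, f x ∂μ - ∫ x in t, f x ∂μ := by
    rw [← measureReal_sdiff hts ht hs, ← setIntegral_sdiff ht hf hts]
    exact setIntegral_ge_of_const_le_real (hsm.diff ht)
      (measure_ne_top_of_subset sdiff_subset hs) hm (hf.mono_set sdiff_subset)
  calc μ.real t / μ.real s * c + (1 - μ.real t / μ.real s) * m
      = (μ.real t * c + m * (μ.real s - μ.real t)) / μ.real s := by field_simp
    _ ≤ (∫ x in s, f x ∂μ) / μ.real s := by gcongr; linarith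
    _ = ⨍ x in s, f x ∂μ := by rw [setAverage_eq, smul_eq_mul, div_eq_inv_mul]

end Average

section Haar

variable {E : Type*} [NormedAddCommGroup E] [NormedSpace ℝ E] [MeasurableSpace E] [BorelSpace E]
  [FiniteDimensional ℝ E] (μ : Measure E) [μ.IsAddHaarMeasure]

theorem ball_ae_eq_closedBall (x : E) {r : ℝ} (hr : 0 < r) : ball x r =ᵐ[μ] closedBall x r :=
  ae_eq_of_subset_of_measure_ge ball_subset_closedBall
    (by rw [Measure.addHaar_closedBall μ x hr.le, Measure.addHaar_ball_of_pos μ x hr])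
    measurableSet_ball.nullMeasurableSet measure_closedBall_lt_top.ne

theorem addHaar_real_ball_div_addHaar_real_ball (x y : E) {r s : ℝ} (hr : 0 < r) (hs : 0 < s) :
    μ.real (ball x r) / μ.real (ball y s) = (r / s) ^ Module.finrank ℝ E := by
  have hunit : 0 < μ.real (ball (0 : E) 1) :=
    ENNReal.toReal_pos (measure_ball_pos μ _ one_pos).ne' measure_ball_lt_top.ne
  simp only [measureReal_def, Measure.addHaar_ball_of_pos μ _ hr,
    Measure.addHaar_ball_of_pos μ _ hs, ENNReal.toReal_mul,
    ENNReal.toReal_ofReal (pow_nonneg hr.le _), ENNReal.toReal_ofReal (pow_nonneg hs.le _)]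
  rw [← measureReal_def, div_pow]
  field_simp

end Haar

variable {n : ℕ} {u : EuclideanSpace ℝ (Fin n) → ℝ} {Ω : Set (EuclideanSpace ℝ (Fin n))}

theorem closedBall_subset_of_mem_shrink {ρ : ℝ} {x : EuclideanSpace ℝ (Fin n)}
    (hx : x ∈ shrink Ω ρ) : closedBall x ρ ⊆ Ω :=
  (closedBall_subset_ball hx.2).trans ball_infDist_compl_subset

theorem SubharmonicOn.le_volumeMean (hu : SubharmonicOn u Ω) {x : EuclideanSpace ℝ (Fin n)}
    {r : ℝ} (hr : 0 < r) (hx : closedBall x r ⊆ Ω) : u x ≤ volumeMean u x r := by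
  rw [volumeMean, Measure.restrict_congr_set (ball_ae_eq_closedBall volume x hr)]
  exact hu.2.2 x r hr hx

theorem sub_mul_oscOn_le {s : Set (EuclideanSpace ℝ (Fin n))} (hs : BddAbove (u '' s))
    {y : EuclideanSpace ℝ (Fin n)} (hy : y ∈ s) {q : ℝ} (hq : q ≤ 1) :
    u y - (1 - q) * oscOn u s ≤ q * u y + (1 - q) * sInf (u '' s) := by
  have hy_le : u y ≤ sSup (u '' s) := le_csSup hs (mem_image_of_mem u hy)
  rw [oscOn]
  nlinarith

theorem stmt14_general (n : ℕ) (Ω : Set (EuclideanSpace ℝ (Fin n)))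
    (u : EuclideanSpace ℝ (Fin n) → ℝ) (hu : SubharmonicOn u Ω)
    (hcont : ContinuousOn u Ω)
    (A δ : ℝ) (hA : 2 < A) (hδ : 0 < δ)
    (x₀ : EuclideanSpace ℝ (Fin n)) (hx₀ : x₀ ∈ shrink Ω ((2 * A + 1) * δ))
    (y₀ ξ₀ : EuclideanSpace ℝ (Fin n))
    (hy₀ : y₀ ∈ closedBall x₀ δ) (hξ₀ : ξ₀ ∈ closedBall x₀ δ)
    (hosc : oscOn u (ball x₀ δ) = u y₀ - u ξ₀) :
    oscOn u (ball x₀ δ) -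
        (1 - (A - 2) ^ n / A ^ n) * oscOn u (ball x₀ (A * δ + δ)) ≤
      volumeMean u ξ₀ (A * δ) - u ξ₀ := by
  rw [mem_closedBall] at hy₀ hξ₀
  have hΩ : closedBall x₀ (A * δ + δ) ⊆ Ω :=
    (closedBall_subset_closedBall (by nlinarith)).trans (closedBall_subset_of_mem_shrink hx₀)
  have hsmall : ball y₀ ((A - 2) * δ) ⊆ ball ξ₀ (A * δ) :=
    ball_subset_ball' (by linarith [dist_triangle_right y₀ ξ₀ x₀])
  have hbig : ball ξ₀ (A * δ) ⊆ ball x₀ (A * δ + δ) := ball_subset_ball' (by linarith)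
  have hcompact := isCompact_closedBall x₀ (A * δ + δ)
  have hbdd : BddAbove (u '' ball x₀ (A * δ + δ)) ∧ BddBelow (u '' ball x₀ (A * δ + δ)) :=
    ⟨(hcompact.bddAbove_image (hcont.mono hΩ)).mono (image_mono ball_subset_closedBall),
      (hcompact.bddBelow_image (hcont.mono hΩ)).mono (image_mono ball_subset_closedBall)⟩
  have hint : IntegrableOn u (ball ξ₀ (A * δ)) :=
    ((hcont.mono hΩ).integrableOn_compact hcompact).mono_set (hbig.trans ball_subset_closedBall)
  have hy₀_mean : u y₀ ≤ volumeMean u y₀ ((A - 2) * δ) :=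
    hu.le_volumeMean (by nlinarith) ((closedBall_subset_closedBall' (by linarith)).trans hΩ)
  have hratio : volume.real (ball y₀ ((A - 2) * δ)) / volume.real (ball ξ₀ (A * δ)) =
      (A - 2) ^ n / A ^ n := by
    rw [addHaar_real_ball_div_addHaar_real_ball _ _ _ (by nlinarith) (by positivity),
      finrank_euclideanSpace_fin, mul_div_mul_right _ _ hδ.ne', div_pow]
  have hmean : (A - 2) ^ n / A ^ n * u y₀ +
      (1 - (A - 2) ^ n / A ^ n) * sInf (u '' ball x₀ (A * δ + δ)) ≤ volumeMean u ξ₀ (A * δ) := by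
    rw [← hratio]
    exact le_setAverage_of_subset hsmall measurableSet_ball measurableSet_ball
      measure_ball_lt_top.ne (measure_ball_pos volume _ (by positivity)).ne' hint hy₀_mean
      fun z hz => csInf_le hbdd.2 (mem_image_of_mem u (hbig hz.1))
  have hq : (A - 2) ^ n / A ^ n ≤ 1 :=
    div_le_one_of_le₀ (pow_le_pow_left₀ (by linarith) (by linarith) n) (by positivity)
  have hy₀_big : y₀ ∈ ball x₀ (A * δ + δ) := mem_ball.2 (by nlinarith)
  linarith [sub_mul_oscOn_le hbdd.1 hy₀_big hq]

theorem stmt14 (n : ℕ) (hn : 1 ≤ n) (Ω : Set (EuclideanSpace ℝ (Fin n)))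
    (hΩo : IsOpen Ω) (hΩc : IsConnected Ω)
    (u : EuclideanSpace ℝ (Fin n) → ℝ) (hu : SubharmonicOn u Ω)
    (hcont : ContinuousOn u Ω)
    (A δ : ℝ) (hA : 2 < A) (hδ : 0 < δ)
    (x₀ : EuclideanSpace ℝ (Fin n)) (hx₀ : x₀ ∈ shrink Ω ((2 * A + 1) * δ))
    (y₀ ξ₀ : EuclideanSpace ℝ (Fin n))
    (hy₀ : y₀ ∈ closedBall x₀ δ) (hξ₀ : ξ₀ ∈ closedBall x₀ δ)
    (hosc : oscOn u (ball x₀ δ) = u y₀ - u ξ₀) :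
    oscOn u (ball x₀ δ) -
        (1 - (A - 2) ^ n / A ^ n) * oscOn u (ball x₀ (A * δ + δ)) ≤
      volumeMean u ξ₀ (A * δ) - u ξ₀ :=
  stmt14_general n Ω u hu hcont A δ hA hδ x₀ hx₀ y₀ ξ₀ hy₀ hξ₀ hosc
end

section
/- Let κ be a modulus of continuity with the growth condition (there exist A with limsup_{t→0⁺} 2nκ(At)/(Aκ(t)) < 1), and let u : Ω̄ → ℝ be bounded, subharmonic on Ω, κ-continuous near ∂Ω, and satisfy M_δu(x) - u(x) ≤ L₃κ(δ) for x ∈ Ω_{Bδ} and small δ (for some B > 1, L₃ > 0). Then u is κ-continuous on Ω̄: there exist L > 0 and δ₃ > 0 such that |u(x) - u(y)| ≤ L·κ(|x-y|) for all x,y ∈ Ω̄ with |x-y| ≤ δ₃. -/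
open MeasureTheory Metric Set Filter

lemma kappa_nat_mul {κ : ℝ → ℝ} (hκ : ModulusOfContinuity κ) (δ : ℝ) (hδ : 0 ≤ δ) :
    ∀ m : ℕ, κ (m * δ) ≤ m * κ δ := by
  intro m
  induction m with
  | zero => simp [hκ.zero]
  | succ k ih =>
      have h1 : ((k : ℝ) + 1) * δ = (k : ℝ) * δ + δ := by ring
      have h2 := hκ.subadd ((k : ℝ) * δ) δ (by positivity) hδ
      push_cast
      rw [h1]
      calc κ ((k : ℝ) * δ + δ) ≤ κ ((k : ℝ) * δ) + κ δ := h2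
        _ ≤ (k : ℝ) * κ δ + κ δ := by linarith
        _ = ((k : ℝ) + 1) * κ δ := by ring

set_option maxHeartbeats 1000000 in
theorem stmt15 (n : ℕ) (hn : 1 ≤ n) (κ : ℝ → ℝ) (hκ : ModulusOfContinuity κ)
    (hgrowth : ∃ A : ℝ, 0 < A ∧
      Filter.limsup (fun t => 2 * n * κ (A * t) / (A * κ t))
        (nhdsWithin 0 (Ioi 0)) < 1)
    (Ω : Set (EuclideanSpace ℝ (Fin n))) (hΩo : IsOpen Ω) (hΩc : IsConnected Ω)
    (hΩb : Bornology.IsBounded Ω)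
    (u : EuclideanSpace ℝ (Fin n) → ℝ) (hu : SubharmonicOn u Ω)
    (hub : ∃ M, ∀ x ∈ closure Ω, |u x| ≤ M)
    (C₀ ε₀ : ℝ) (hC₀ : 0 < C₀) (hε₀ : 0 < ε₀)
    (hbd : ∀ ζ ∈ frontier Ω, ∀ z ∈ closure Ω, dist z ζ ≤ ε₀ →
      |u z - u ζ| ≤ C₀ * κ (dist z ζ))
    (B L₃ δ₁ : ℝ) (hB : 1 < B) (hL₃ : 0 < L₃) (hδ₁ : 0 < δ₁)
    (hM : ∀ δ, 0 < δ → δ < δ₁ → ∀ x ∈ shrink Ω (B * δ),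
      maxBall u x δ - u x ≤ L₃ * κ δ) :
    ∃ L > 0, ∃ δ₃ > 0, ∀ x ∈ closure Ω, ∀ y ∈ closure Ω,
      dist x y ≤ δ₃ → |u x - u y| ≤ L * κ (dist x y) := by
  obtain ⟨M, hMbd⟩ := hub
  -- Ωᶜ is nonempty
  obtain ⟨R, hR⟩ := hΩb.subset_closedBall 0
  have hcne : Ωᶜ.Nonempty := by
    refine ⟨EuclideanSpace.single ⟨0, hn⟩ (|R| + 1), fun hmem => ?_⟩
    have := hR hmem
    rw [mem_closedBall, dist_zero_right, EuclideanSpace.norm_single] at this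
    have : |(|R| + 1)| ≤ R := this
    rw [abs_of_nonneg (by positivity)] at this
    have := le_abs_self R
    linarith
  have hBpos : (0:ℝ) < B := by linarith
  set L := L₃ + 2 * C₀ * (B + 3) with hLdef
  have hLpos : 0 < L := by positivity
  refine ⟨L, hLpos, min (δ₁ / 2) (ε₀ / (B + 2)), by positivity, ?_⟩
  intro x hx y hy hxy
  rcases eq_or_lt_of_le (dist_nonneg : (0:ℝ) ≤ dist x y) with h0 | h0
  · have hxy0 : x = y := dist_eq_zero.1 h0.symm
    subst hxy0
    simp [hκ.zero]
  set δ := dist x y with hδdef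
  have hδδ₁ : δ < δ₁ := by
    have := hxy.trans (min_le_left _ _); linarith
  have hεbd : (B + 2) * δ ≤ ε₀ := by
    have h1 : δ ≤ ε₀ / (B + 2) := hxy.trans (min_le_right _ _)
    have h2 : (0:ℝ) < B + 2 := by linarith
    calc (B + 2) * δ ≤ (B + 2) * (ε₀ / (B + 2)) := by nlinarith
      _ = ε₀ := by field_simp
  have hκδ : 0 ≤ κ δ := hκ.nonneg δ h0.le
  by_cases hcase : (B + 1) * δ < Metric.infDist x Ωᶜ
  · -- interior case
    have hxΩ : x ∈ Ω := by
      by_contra hxn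
      have : Metric.infDist x Ωᶜ = 0 := Metric.infDist_zero_of_mem hxn
      nlinarith
    have hxs : x ∈ shrink Ω (B * δ) := ⟨hxΩ, by nlinarith⟩
    have hyd : Metric.infDist y Ωᶜ > B * δ := by
      have h1 : Metric.infDist x Ωᶜ ≤ Metric.infDist y Ωᶜ + dist x y :=
        Metric.infDist_le_infDist_add_dist
      nlinarith
    have hyΩ : y ∈ Ω := by
      by_contra hyn
      have : Metric.infDist y Ωᶜ = 0 := Metric.infDist_zero_of_mem hyn
      nlinarith
    have hys : y ∈ shrink Ω (B * δ) := ⟨hyΩ, hyd⟩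
    -- closed balls are in Ω
    have hball : ∀ z : EuclideanSpace ℝ (Fin n), z ∈ shrink Ω (B * δ) →
        closedBall z δ ⊆ Ω := by
      intro z hz w hw
      by_contra hwn
      have := Metric.infDist_le_dist_of_mem (x := z) (Set.mem_compl hwn)
      have hd := hz.2
      rw [mem_closedBall] at hw
      rw [dist_comm] at this
      nlinarith
    have hbdd : ∀ z : EuclideanSpace ℝ (Fin n), z ∈ shrink Ω (B * δ) →
        BddAbove (u '' closedBall z δ) := by
      intro z hz
      refine ⟨M, fun v hv => ?_⟩
      obtain ⟨w, hw, rfl⟩ := hv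
      exact (abs_le.1 (hMbd w (subset_closure (hball z hz hw)))).2
    have h1 : u y - u x ≤ L₃ * κ δ := by
      have hyx : u y ≤ maxBall u x δ :=
        le_csSup (hbdd x hxs) ⟨y, by simp [mem_closedBall, dist_comm, hδdef], rfl⟩
      have := hM δ h0 hδδ₁ x hxs
      linarith
    have h2 : u x - u y ≤ L₃ * κ δ := by
      have hxy' : u x ≤ maxBall u y δ :=
        le_csSup (hbdd y hys) ⟨x, by simp [mem_closedBall, hδdef], rfl⟩
      have := hM δ h0 hδδ₁ y hys
      linarith
    have : |u x - u y| ≤ L₃ * κ δ := abs_sub_le_iff.2 ⟨h2, h1⟩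
    have hL3L : L₃ ≤ L := by nlinarith [hLdef]
    have hLκ : L₃ * κ δ ≤ L * κ δ := mul_le_mul_of_nonneg_right hL3L hκδ
    linarith
  · -- boundary case
    push_neg at hcase
    obtain ⟨ζ, hζf, hζd⟩ : ∃ ζ ∈ frontier Ω, dist x ζ ≤ (B + 1) * δ := by
      by_cases hxΩ : x ∈ Ω
      · have hdpos : 0 < Metric.infDist x Ωᶜ := by
          rw [← (hΩo.isClosed_compl.notMem_iff_infDist_pos hcne)]
          simpa using hxΩ
        obtain ⟨ζ, hζmem, hζeq⟩ := hΩo.isClosed_compl.exists_infDist_eq_dist hcne x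
        refine ⟨ζ, ?_, by rw [← hζeq]; exact hcase⟩
        rw [hΩo.frontier_eq]
        refine ⟨?_, hζmem⟩
        have hb : ball x (Metric.infDist x Ωᶜ) ⊆ Ω := by
          intro w hw
          by_contra hwn
          have := Metric.infDist_le_dist_of_mem (x := x) (Set.mem_compl hwn)
          rw [mem_ball, dist_comm] at hw
          linarith
        have : ζ ∈ closedBall x (Metric.infDist x Ωᶜ) := by
          rw [mem_closedBall, dist_comm, ← hζeq]
        rw [← closure_ball x (ne_of_gt hdpos)] at this
        exact closure_mono hb this
      · refine ⟨x, ?_, by simp; positivity⟩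
        rw [hΩo.frontier_eq]
        exact ⟨hx, hxΩ⟩
    have hζd' : dist y ζ ≤ (B + 2) * δ := by
      calc dist y ζ ≤ dist y x + dist x ζ := dist_triangle _ _ _
        _ ≤ δ + (B + 1) * δ := by rw [dist_comm y x]; linarith
        _ = (B + 2) * δ := by ring
    have hbx := hbd ζ hζf x hx (hζd.trans (by nlinarith))
    have hby := hbd ζ hζf y hy (hζd'.trans hεbd)
    -- bound κ values
    set m := ⌈B + 2⌉₊ with hm
    have hmle : (B + 2 : ℝ) ≤ m := Nat.le_ceil _
    have hmlt : (m : ℝ) ≤ B + 3 := by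
      have := Nat.ceil_lt_add_one (a := B + 2) (by linarith)
      linarith
    have hκm : κ ((B + 2) * δ) ≤ (B + 3) * κ δ := by
      calc κ ((B + 2) * δ) ≤ κ (m * δ) := hκ.mono _ _ (by nlinarith) (by nlinarith)
        _ ≤ m * κ δ := kappa_nat_mul hκ δ h0.le m
        _ ≤ (B + 3) * κ δ := by nlinarith
    have hκx : κ (dist x ζ) ≤ (B + 3) * κ δ := by
      calc κ (dist x ζ) ≤ κ ((B + 2) * δ) :=
            hκ.mono _ _ dist_nonneg (by nlinarith)
        _ ≤ (B + 3) * κ δ := hκm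
    have hκy : κ (dist y ζ) ≤ (B + 3) * κ δ := by
      calc κ (dist y ζ) ≤ κ ((B + 2) * δ) := hκ.mono _ _ dist_nonneg hζd'
        _ ≤ (B + 3) * κ δ := hκm
    have habs : |u x - u y| ≤ |u x - u ζ| + |u y - u ζ| := by
      have := abs_sub (u x - u ζ) (u y - u ζ)
      calc |u x - u y| = |(u x - u ζ) - (u y - u ζ)| := by ring_nf
        _ ≤ |u x - u ζ| + |u y - u ζ| := abs_sub _ _
    calc |u x - u y| ≤ |u x - u ζ| + |u y - u ζ| := habs
      _ ≤ C₀ * κ (dist x ζ) + C₀ * κ (dist y ζ) := by linarith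
      _ ≤ C₀ * ((B + 3) * κ δ) + C₀ * ((B + 3) * κ δ) := by nlinarith
      _ = 2 * C₀ * (B + 3) * κ δ := by ring
      _ ≤ L * κ δ := mul_le_mul_of_nonneg_right (by nlinarith [hLdef]) hκδ
end
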